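/- Let d and n be positive integers, g = gcd(n, d^∞), and let ρ_d denote the direct sum of all φ(d) characters of C_d of order d. Then Ind_{C_d}^{C_{dn}} ρ_d = ⊕_{n₁ | (n/g)} (g·φ(d)/φ(g·d)) ρ_{d·g·n₁}, where on the right ρ_m denotes the direct sum of all characters of C_{dn} of order m and the multiplicities g·φ(d)/φ(g·d) are integers. -/
import Mathlib


open scoped Classical

set_option synthInstance.maxHeartbeats 1000000
set_option maxHeartbeats 1000000

/-- `gcd (n, d^∞) = lim_k gcd (n, d^k)`: the largest divisor of `n` all of whose prime
factors divide `d`. -/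
def gcdPow (n d : ℕ) : ℕ :=
  ∏ q ∈ n.primeFactors.filter (fun q => q ∣ d), q ^ n.factorization q

section Aux

lemma gcdPow_pos (n d : ℕ) : 0 < gcdPow n d := by
  apply Finset.prod_pos
  intro q hq
  exact pow_pos (Nat.prime_of_mem_primeFactors (Finset.mem_filter.mp hq).1).pos _

lemma gcdPow_mul_eq (n d : ℕ) (hn : n ≠ 0) :
    gcdPow n d * (∏ q ∈ n.primeFactors.filter (fun q => ¬ q ∣ d), q ^ n.factorization q) = n := by
  rw [gcdPow, Finset.prod_filter_mul_prod_filter_not]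
  have := Nat.factorization_prod_pow_eq_self hn
  rwa [Finsupp.prod, Nat.support_factorization] at this

lemma coprime_compl (n d : ℕ) :
    Nat.Coprime (∏ q ∈ n.primeFactors.filter (fun q => ¬ q ∣ d), q ^ n.factorization q) d := by
  apply Nat.Coprime.prod_left
  intro q hq
  obtain ⟨hq1, hq2⟩ := Finset.mem_filter.mp hq
  exact Nat.Coprime.pow_left _
    (((Nat.prime_of_mem_primeFactors hq1).coprime_iff_not_dvd).mpr hq2)

lemma prime_dvd_gcdPow {n d p : ℕ} (hp : p.Prime) (h : p ∣ gcdPow n d) : p ∣ d := by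
  rw [gcdPow] at h
  obtain ⟨q, hq, hpq⟩ := (hp.prime.dvd_finset_prod_iff _).mp h
  obtain ⟨hq1, hq2⟩ := Finset.mem_filter.mp hq
  have := hp.dvd_of_dvd_pow hpq
  rwa [(Nat.prime_dvd_prime_iff_eq hp (Nat.prime_of_mem_primeFactors hq1)).mp this]

lemma totient_mul_of_primes_dvd (d : ℕ) :
    ∀ g : ℕ, 0 < g → (∀ p, p.Prime → p ∣ g → p ∣ d) →
      Nat.totient (g * d) = g * Nat.totient d := by
  intro g
  induction g using Nat.strong_induction_on with
  | _ g ih =>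
    intro hg hprimes
    rcases eq_or_ne g 1 with rfl | hne
    · simp
    · obtain ⟨p, hp, hpg⟩ := Nat.exists_prime_and_dvd hne
      obtain ⟨g', rfl⟩ := hpg
      have hg' : 0 < g' := Nat.pos_of_ne_zero (by rintro rfl; simp at hg)
      have hlt : g' < p * g' := by
        have := hp.two_le
        nlinarith
      have hpd : p ∣ d := hprimes p hp ⟨g', rfl⟩
      have h1 : Nat.totient (p * g' * d) = p * Nat.totient (g' * d) := by
        rw [mul_assoc]
        exact Nat.totient_mul_of_prime_of_dvd hp (hpd.mul_left g')
      rw [h1, ih g' hlt hg' (fun q hq hqg => hprimes q hq (hqg.mul_left p)), mul_assoc]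

/-- The key arithmetic equivalence. -/
lemma key_arith {d n g h : ℕ} (hd : 0 < d) (hg : 0 < g) (hh : 0 < h)
    (hgh : n = g * h) (hcop : Nat.Coprime h d)
    (hprimes : ∀ p, p.Prime → p ∣ g → p ∣ d) (m : ℕ) :
    (m ∣ d * n ∧ m / Nat.gcd m n = d) ↔ ∃ n₁ : ℕ, n₁ ∣ h ∧ m = d * g * n₁ := by
  have hn : 0 < n := by rw [hgh]; positivity
  have hgn : g ∣ n := ⟨h, hgh⟩
  constructor
  · rintro ⟨hmN, hmd⟩
    set t := Nat.gcd m n with ht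
    have htm : t ∣ m := Nat.gcd_dvd_left m n
    have htn : t ∣ n := Nat.gcd_dvd_right m n
    have hm_eq : m = t * d := Nat.eq_mul_of_div_eq_right htm hmd
    have hgm : g ∣ m := by
      by_contra hgm
      set a := Nat.gcd m g with ha
      have hag : a ∣ g := Nat.gcd_dvd_right m g
      have ham : a ∣ m := Nat.gcd_dvd_left m g
      have hapos : 0 < a := Nat.gcd_pos_of_pos_right m hg
      have hga_ne : g / a ≠ 1 := by
        intro h1
        have : g = a * 1 := Nat.eq_mul_of_div_eq_right hag h1
        rw [mul_one] at this
        exact hgm (this ▸ ham)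
      obtain ⟨p, hp, hpd'⟩ := Nat.exists_prime_and_dvd hga_ne
      have hpg : p ∣ g := hpd'.trans (Nat.div_dvd_of_dvd hag)
      have hpdd : p ∣ d := hprimes p hp hpg
      have hat : a ∣ t := Nat.dvd_gcd ham (hag.trans hgn)
      have h1 : a * p ∣ g := by
        obtain ⟨c, hc⟩ := hag
        have hca : g / a = c := by rw [hc, Nat.mul_div_cancel_left _ hapos]
        rw [hc]
        exact mul_dvd_mul_left a (hca ▸ hpd')
      have h2 : a * p ∣ m := by
        obtain ⟨t', ht'⟩ := hat
        have hme : m = a * (t' * d) := by rw [hm_eq, ht']; ring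
        rw [hme]
        exact mul_dvd_mul_left a (hpdd.mul_left t')
      have h3 : a * p ∣ a := Nat.dvd_gcd h2 h1
      have h4 := Nat.le_of_dvd hapos h3
      have h5 := hp.two_le
      nlinarith
    have hgt : g ∣ t := Nat.dvd_gcd hgm hgn
    obtain ⟨n₁, hn₁⟩ := hgt
    refine ⟨n₁, ?_, ?_⟩
    · have hdl : g * n₁ ∣ g * h := by rw [← hn₁, ← hgh]; exact htn
      exact (mul_dvd_mul_iff_left hg.ne').mp hdl
    · rw [hm_eq, hn₁]; ring
  · rintro ⟨n₁, hn₁h, rfl⟩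
    have hn₁pos : 0 < n₁ := Nat.pos_of_dvd_of_pos hn₁h hh
    constructor
    · rw [hgh, show d * g * n₁ = d * (g * n₁) by ring]
      exact Nat.mul_dvd_mul_left d (Nat.mul_dvd_mul_left g hn₁h)
    · have hgcd : Nat.gcd (d * g * n₁) n = g * n₁ := by
        rw [hgh, show d * g * n₁ = g * (d * n₁) by ring, Nat.gcd_mul_left,
          Nat.Coprime.gcd_mul_left_cancel n₁ hcop.symm, Nat.gcd_eq_left hn₁h]
      rw [hgcd, show d * g * n₁ = d * (g * n₁) by ring,
        Nat.mul_div_cancel _ (by positivity)]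

/-- The order of a homomorphism from a cyclic group equals the order of its value on a
generator. -/
lemma orderOf_hom_eq_of_generator {G M : Type*} [Group G] [CommGroup M] {x₀ : G}
    (hx : ∀ y : G, y ∈ Subgroup.zpowers x₀) (ψ : G →* M) :
    orderOf ψ = orderOf (ψ x₀) := by
  rw [orderOf_eq_orderOf_iff]
  intro k
  constructor
  · intro hk
    have := congrArg (fun f : G →* M => f x₀) hk
    simpa using this
  · intro hk
    ext y
    obtain ⟨j, rfl⟩ := hx y
    show (ψ ^ k) (x₀ ^ j) = 1
    rw [MonoidHom.pow_apply, map_zpow, ← zpow_natCast, ← zpow_mul, mul_comm,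
      zpow_mul, zpow_natCast, hk, one_zpow]

/-- The number of elements of a given order in a finite cyclic group. -/
lemma card_orderOf_eq_totient' {G : Type*} [Group G] [IsCyclic G] [Finite G] {m : ℕ}
    (hm : m ∣ Nat.card G) : Nat.card {a : G // orderOf a = m} = Nat.totient m := by
  have : Fintype G := Fintype.ofFinite G
  rw [Nat.card_eq_fintype_card, Fintype.card_subtype]
  exact IsCyclic.card_orderOf_eq_totient (by rwa [← Nat.card_eq_fintype_card])

end Aux

/-- Let `d, n` be positive integers, `g = gcd (n, d^∞)` and `ρ_d` the
direct sum of all `φ d` characters of `C_d` of order `d`.  Then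
`Ind_{C_d}^{C_{dn}} ρ_d = ⊕_{n₁ ∣ n/g} (g φ d / φ (g d)) ρ_{d g n₁}`, the multiplicities
`g φ d / φ (g d)` being integers.  (Here `C_{dn}` is modelled by a cyclic group `G` of
order `d * n` and `C_d` by its subgroup `H` of order `d`; by Frobenius reciprocity the
constituents of `Ind ρ_d`, with multiplicity, are exactly the characters `ψ` of `G` whose
restriction to `H` has order `d`, so the claim is a count of such `ψ` of each order.) -/
theorem statement13 (G : Type) [Group G] [IsCyclic G] [Finite G]
    (d n : ℕ) (hd : 0 < d) (hn : 0 < n) (hG : Nat.card G = d * n)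
    (H : Subgroup G) (hH : Nat.card ↥H = d) :
    Nat.totient (gcdPow n d * d) ∣ gcdPow n d * Nat.totient d ∧
      ∀ m : ℕ,
        Nat.card {ψ : G →* ℂˣ // orderOf (ψ.comp H.subtype) = d ∧ orderOf ψ = m} =
          (if ∃ n₁ : ℕ, n₁ ∣ n / gcdPow n d ∧ m = d * gcdPow n d * n₁
           then (gcdPow n d * Nat.totient d / Nat.totient (gcdPow n d * d)) * Nat.totient m
           else 0) := by
  set g := gcdPow n d with hgdef
  have hg : 0 < g := gcdPow_pos n d
  set h := ∏ q ∈ n.primeFactors.filter (fun q => ¬ q ∣ d), q ^ n.factorization q with hhdef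
  have hgh : n = g * h := (gcdPow_mul_eq n d hn.ne').symm
  have hh : 0 < h := by
    apply Finset.prod_pos
    intro q hq
    exact pow_pos (Nat.prime_of_mem_primeFactors (Finset.mem_filter.mp hq).1).pos _
  have hcop : Nat.Coprime h d := coprime_compl n d
  have hprimes : ∀ p, p.Prime → p ∣ g → p ∣ d := fun p hp hpg => prime_dvd_gcdPow hp hpg
  have htot : Nat.totient (g * d) = g * Nat.totient d :=
    totient_mul_of_primes_dvd d g hg hprimes
  have hng : n / g = h := by rw [hgh, Nat.mul_div_cancel_left _ hg]
  refine ⟨htot.dvd, ?_⟩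
  have hmult : g * Nat.totient d / Nat.totient (g * d) = 1 := by
    rw [htot, Nat.div_self (Nat.mul_pos hg (Nat.totient_pos.mpr hd))]
  intro m
  set N := d * n with hNdef
  have hNpos : 0 < N := Nat.mul_pos hd hn
  rw [hng, hmult, one_mul]
  -- generator of G
  obtain ⟨x₀, hx₀⟩ := IsCyclic.exists_generator (α := G)
  have hordx₀ : orderOf x₀ = N := by rw [orderOf_eq_card_of_forall_mem_zpowers hx₀, hG]
  -- generator of H
  obtain ⟨h₀, hh₀⟩ := IsCyclic.exists_generator (α := ↥H)
  have hordh₀ : orderOf (h₀ : G) = d := by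
    rw [Subgroup.orderOf_coe, orderOf_eq_card_of_forall_mem_zpowers hh₀, hH]
  -- write h₀ as a positive power of x₀
  obtain ⟨k₀, hk₀0⟩ := (mem_powers_iff_mem_zpowers).mpr (hx₀ (h₀ : G))
  have hk₀ : x₀ ^ k₀ = (h₀ : G) := hk₀0
  set k := if k₀ = 0 then N else k₀ with hkdef
  have hk : x₀ ^ k = (h₀ : G) := by
    rcases eq_or_ne k₀ 0 with h0 | h0
    · rw [hkdef, if_pos h0, ← hordx₀, pow_orderOf_eq_one, ← hk₀, h0, pow_zero]
    · rw [hkdef, if_neg h0, hk₀]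
  have hkne : k ≠ 0 := by
    rcases eq_or_ne k₀ 0 with h0 | h0 <;> simp [hkdef, h0, hNpos.ne']
  -- gcd N k = n
  have hgcdNk : Nat.gcd N k = n := by
    have h1 : orderOf (x₀ ^ k) = d := by rw [hk, hordh₀]
    rw [orderOf_pow' _ hkne, hordx₀] at h1
    have h2 : Nat.gcd N k ∣ N := Nat.gcd_dvd_left N k
    have h3 : N = Nat.gcd N k * d := Nat.eq_mul_of_div_eq_right h2 h1
    have h4 : d * Nat.gcd N k = d * n := by rw [mul_comm d (Nat.gcd N k), ← h3]
    exact Nat.eq_of_mul_eq_mul_left hd h4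
  -- per-character facts
  have hψfacts : ∀ ψ : G →* ℂˣ,
      orderOf ψ = orderOf (ψ x₀) ∧ orderOf (ψ x₀) ∣ N ∧
      orderOf (ψ.comp H.subtype) = orderOf (ψ x₀) / Nat.gcd (orderOf (ψ x₀)) n := by
    intro ψ
    have e1 : orderOf ψ = orderOf (ψ x₀) := orderOf_hom_eq_of_generator hx₀ ψ
    have e2 : (ψ x₀) ^ N = 1 := by rw [← map_pow, ← hordx₀, pow_orderOf_eq_one, map_one]
    have e3 : orderOf (ψ x₀) ∣ N := orderOf_dvd_of_pow_eq_one e2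
    have e4 : orderOf (ψ.comp H.subtype) = orderOf (ψ (h₀ : G)) := by
      have := orderOf_hom_eq_of_generator hh₀ (ψ.comp H.subtype)
      simpa using this
    have e5 : ψ (h₀ : G) = (ψ x₀) ^ k := by rw [← hk, map_pow]
    have e6 : orderOf ((ψ x₀) ^ k) = orderOf (ψ x₀) / Nat.gcd (orderOf (ψ x₀)) k :=
      orderOf_pow' _ hkne
    have e7 : Nat.gcd (orderOf (ψ x₀)) k = Nat.gcd (orderOf (ψ x₀)) n := by
      apply Nat.dvd_antisymm
      · refine Nat.dvd_gcd (Nat.gcd_dvd_left _ _) ?_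
        have hx : Nat.gcd (orderOf (ψ x₀)) k ∣ Nat.gcd N k :=
          Nat.dvd_gcd ((Nat.gcd_dvd_left _ _).trans e3) (Nat.gcd_dvd_right _ _)
        rwa [hgcdNk] at hx
      · refine Nat.dvd_gcd (Nat.gcd_dvd_left _ _) ?_
        exact (Nat.gcd_dvd_right _ _).trans (hgcdNk ▸ Nat.gcd_dvd_right N k)
    exact ⟨e1, e3, by rw [e4, e5, e6, e7]⟩
  -- the pointwise condition
  have hcond : ∀ ψ : G →* ℂˣ,
      (orderOf (ψ.comp H.subtype) = d ∧ orderOf ψ = m) ↔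
        (orderOf ψ = m ∧ (m ∣ N ∧ m / Nat.gcd m n = d)) := by
    intro ψ
    obtain ⟨e1, e3, e4⟩ := hψfacts ψ
    constructor
    · rintro ⟨h1, h2⟩
      have hm' : orderOf (ψ x₀) = m := by rw [← e1, h2]
      refine ⟨h2, ?_, ?_⟩
      · rw [← hm']; exact e3
      · rw [← hm', ← e4]; exact h1
    · rintro ⟨h2, _, h3⟩
      have hm' : orderOf (ψ x₀) = m := by rw [← e1, h2]
      refine ⟨?_, h2⟩
      rw [e4, hm', h3]
  have hiff : (m ∣ d * n ∧ m / Nat.gcd m n = d) ↔ ∃ n₁ : ℕ, n₁ ∣ h ∧ m = d * g * n₁ :=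
    key_arith hd hg hh hgh hcop hprimes m
  by_cases hC : m ∣ N ∧ m / Nat.gcd m n = d
  · rw [if_pos (hiff.mp hC)]
    letI : CommGroup G := IsCyclic.commGroup
    haveI : NeZero ((Monoid.exponent G : ℂ)) :=
      ⟨by exact_mod_cast Monoid.exponent_ne_zero_of_finite⟩
    obtain ⟨e⟩ := CommGroup.monoidHom_mulEquiv_of_hasEnoughRootsOfUnity G ℂ
    have h1 : {ψ : G →* ℂˣ // orderOf (ψ.comp H.subtype) = d ∧ orderOf ψ = m} ≃
        {ψ : G →* ℂˣ // orderOf ψ = m} :=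
      Equiv.subtypeEquivRight (fun ψ => by rw [hcond ψ]; simp [hC])
    have h2 : {ψ : G →* ℂˣ // orderOf ψ = m} ≃ {a : G // orderOf a = m} :=
      Equiv.subtypeEquiv e.toEquiv
        (fun ψ => Iff.symm (iff_of_eq (congrArg (· = m) (MulEquiv.orderOf_eq e ψ))))
    have hequiv := h1.trans h2
    rw [Nat.card_congr hequiv, card_orderOf_eq_totient' (by rw [hG]; exact hC.1)]
  · rw [if_neg (fun hex => hC (hiff.mpr hex))]
    have : IsEmpty {ψ : G →* ℂˣ // orderOf (ψ.comp H.subtype) = d ∧ orderOf ψ = m} :=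
      ⟨fun ⟨ψ, hψ⟩ => hC ((hcond ψ).mp hψ).2⟩
    exact Nat.card_of_isEmpty
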